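/- arXiv:2009.02257 — 2 statements merged into one kernel-verified Lean document; each statement's English description precedes it below -/
import Mathlib

section
/- Let n have l-bounded gaps and let B be a Schauder basis with basis constant K. If B is C_ql-n-quasi-greedy for largest coefficients, then B is M-quasi-greedy for largest coefficients (i.e. for all finite A), with M ≤ max{α₁α₂n₁, C_ql(K + l − 1)}. -/
/-!
If `|A| < n₁` the bound is elementary: `‖1_{εA}‖ ≤ α₁|A|`, while `e_i^*(1_{εA} + x) = ε_i` for
`i ∈ A`, so `‖1_{εA} + x‖ ≥ 1/α₂`. Otherwise choose `k` with `n_k ≤ |A| < n_{k+1} ≤ l n_k` and write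
`|A| = t n_k + r` with `r < n_k`, so `t ≤ l - 1`. Listing `A` increasingly, split it into its first
`r` elements followed by `t` blocks of `n_k` consecutive elements. Every block has admissible size,
and `n`-quasi-greediness, with the rest of `1_{εA}` absorbed into the perturbation, bounds it by
`C_ql‖1_{εA} + x‖`. The first `r` elements are the image of the first `n_k` under a partial sum
projection of the basis, which costs a factor `K`.
-/

open Finset

theorem Nat.exists_eq_of_le_of_map_succ_le {φ : ℕ → ℕ} (h0 : φ 0 = 0)
    (hstep : ∀ n, φ (n + 1) ≤ φ n + 1) {p : ℕ} : ∀ {M}, p ≤ φ M → ∃ n, φ n = p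
  | 0, hp => ⟨0, by omega⟩
  | M + 1, hp => by
    rcases Nat.lt_or_ge (φ M) p with hlt | hle
    · exact ⟨M + 1, by have := hstep M; omega⟩
    · exact Nat.exists_eq_of_le_of_map_succ_le h0 hstep hle

namespace Finset

theorem card_filter_lt_succ_le (A : Finset ℕ) (N : ℕ) :
    #(A.filter (· < N + 1)) ≤ #(A.filter (· < N)) + 1 := by
  refine (card_le_card fun i hi => ?_).trans (card_insert_le N _)
  rw [mem_filter] at hi
  rw [mem_insert, mem_filter]
  rcases Nat.lt_succ_iff_lt_or_eq.mp hi.2 with h | h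
  exacts [Or.inr ⟨hi.1, h⟩, Or.inl h]

theorem exists_card_filter_lt_eq {A : Finset ℕ} {p : ℕ} (hp : p ≤ #A) :
    ∃ N, #(A.filter (· < N)) = p := by
  have hA : A.filter (· < A.sup id + 1) = A :=
    filter_true_of_mem fun i hi => Nat.lt_succ_of_le (le_sup (f := id) hi)
  refine Nat.exists_eq_of_le_of_map_succ_le (by simp) (card_filter_lt_succ_le A)
    (M := A.sup id + 1) ?_
  rwa [hA]

theorem filter_lt_subset_of_card_le {A : Finset ℕ} {M N : ℕ}
    (h : #(A.filter (· < M)) ≤ #(A.filter (· < N))) : A.filter (· < M) ⊆ A.filter (· < N) := by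
  rcases le_total M N with hMN | hNM
  · exact monotone_filter_right A fun i _ hi => hi.trans_le hMN
  · have hsub : A.filter (· < N) ⊆ A.filter (· < M) :=
      monotone_filter_right A fun i _ hi => hi.trans_le hNM
    exact (eq_of_subset_of_card_le hsub h).symm.subset

end Finset

section Blocks

variable {X : Type*} [SeminormedAddCommGroup X] (v : ℕ → X) {A : Finset ℕ} {ν : ℕ} {c : ℝ}

theorem norm_sum_filter_lt_le_add_mul (hblock : ∀ S ⊆ A, #S = ν → ‖∑ i ∈ S, v i‖ ≤ c) (N : ℕ) :
    ∀ s M : ℕ, #(A.filter (· < M)) = #(A.filter (· < N)) + s * ν →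
      ‖∑ i ∈ A.filter (· < M), v i‖ ≤ ‖∑ i ∈ A.filter (· < N), v i‖ + s * c
  | 0, M, hM => by
    have hMN : A.filter (· < M) = A.filter (· < N) :=
      (filter_lt_subset_of_card_le (by omega)).antisymm (filter_lt_subset_of_card_le (by omega))
    simp [hMN]
  | s + 1, M, hM => by
    rw [Nat.succ_mul] at hM
    obtain ⟨M', hM'⟩ := exists_card_filter_lt_eq (A := A) (p := #(A.filter (· < N)) + s * ν)
      (by have := card_filter_le A (· < M); omega)
    have hsub : A.filter (· < M') ⊆ A.filter (· < M) := filter_lt_subset_of_card_le (by omega)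
    have hblock_card : #(A.filter (· < M) \ A.filter (· < M')) = ν := by
      rw [card_sdiff_of_subset hsub]; omega
    calc ‖∑ i ∈ A.filter (· < M), v i‖
        = ‖∑ i ∈ A.filter (· < M) \ A.filter (· < M'), v i + ∑ i ∈ A.filter (· < M'), v i‖ := by
          rw [sum_sdiff hsub]
      _ ≤ c + (‖∑ i ∈ A.filter (· < N), v i‖ + s * c) :=
          norm_add_le_of_le (hblock _ (sdiff_subset.trans (filter_subset _ _)) hblock_card)
            (norm_sum_filter_lt_le_add_mul hblock N s M' hM')
      _ = ‖∑ i ∈ A.filter (· < N), v i‖ + ((s + 1 : ℕ) : ℝ) * c := by push_cast; ring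

theorem norm_sum_le_norm_sum_filter_lt_add_mul (hblock : ∀ S ⊆ A, #S = ν → ‖∑ i ∈ S, v i‖ ≤ c)
    {N : ℕ} (hN : #(A.filter (· < N)) = #A % ν) :
    ‖∑ i ∈ A, v i‖ ≤ ‖∑ i ∈ A.filter (· < N), v i‖ + (#A / ν : ℕ) * c := by
  obtain ⟨M, hM⟩ := exists_card_filter_lt_eq (le_refl #A)
  have hMA : A.filter (· < M) = A := eq_of_subset_of_card_le (filter_subset _ _) hM.ge
  simpa only [hMA] using norm_sum_filter_lt_le_add_mul v hblock N (#A / ν) M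
    (by rw [hM, hN, Nat.mod_add_div'])

end Blocks

section Biorthogonal

variable {X : Type*} [NormedAddCommGroup X] [NormedSpace ℝ X] {e : ℕ → X} {f : ℕ → X →L[ℝ] ℝ}

theorem apply_sum_smul (hbi : ∀ i j, f i (e j) = if i = j then (1 : ℝ) else 0) (S : Finset ℕ)
    (a : ℕ → ℝ) (i : ℕ) : f i (∑ j ∈ S, a j • e j) = if i ∈ S then a i else 0 := by
  simp only [map_sum, map_smul, hbi, smul_eq_mul, mul_ite, mul_one, mul_zero, sum_ite_eq]

theorem sum_range_apply_sum_smul_smul (hbi : ∀ i j, f i (e j) = if i = j then (1 : ℝ) else 0)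
    (S : Finset ℕ) (a : ℕ → ℝ) (N : ℕ) :
    ∑ i ∈ range N, f i (∑ j ∈ S, a j • e j) • e i = ∑ j ∈ S.filter (· < N), a j • e j := by
  simp only [apply_sum_smul hbi, ite_smul, zero_smul, ← sum_filter]
  congr 1
  ext i
  simp [and_comm]

theorem norm_sum_smul_le_mul_card_mul_norm (hbi : ∀ i j, f i (e j) = if i = j then (1 : ℝ) else 0)
    {α₁ α₂ : ℝ} (hα₁ : ∀ i, ‖e i‖ ≤ α₁) (hα₂ : ∀ i, ‖f i‖ ≤ α₂) {A : Finset ℕ} {ε : ℕ → ℝ} {x : X}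
    (hε : ∀ i ∈ A, |ε i| = 1) (hx : ∀ i ∈ A, f i x = 0) :
    ‖∑ i ∈ A, ε i • e i‖ ≤ α₁ * α₂ * #A * ‖(∑ i ∈ A, ε i • e i) + x‖ := by
  rcases A.eq_empty_or_nonempty with rfl | ⟨i₀, hi₀⟩
  · simp
  have hy : 1 ≤ α₂ * ‖(∑ i ∈ A, ε i • e i) + x‖ := calc
    1 = ‖f i₀ ((∑ i ∈ A, ε i • e i) + x)‖ := by
      rw [map_add, apply_sum_smul hbi, if_pos hi₀, hx i₀ hi₀, add_zero, Real.norm_eq_abs,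
        hε i₀ hi₀]
    _ ≤ ‖f i₀‖ * ‖(∑ i ∈ A, ε i • e i) + x‖ := (f i₀).le_opNorm _
    _ ≤ α₂ * ‖(∑ i ∈ A, ε i • e i) + x‖ := by gcongr; exact hα₂ i₀
  have hsum : ‖∑ i ∈ A, ε i • e i‖ ≤ #A * α₁ := by
    refine (norm_sum_le_of_le A fun i hi => ?_).trans_eq (by rw [sum_const, nsmul_eq_mul])
    rw [norm_smul, Real.norm_eq_abs, hε i hi, one_mul]
    exact hα₁ i
  have hα₁0 : 0 ≤ α₁ := (norm_nonneg _).trans (hα₁ i₀)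
  calc ‖∑ i ∈ A, ε i • e i‖ ≤ #A * α₁ * 1 := by rwa [mul_one]
    _ ≤ #A * α₁ * (α₂ * ‖(∑ i ∈ A, ε i • e i) + x‖) := by gcongr
    _ = α₁ * α₂ * #A * ‖(∑ i ∈ A, ε i • e i) + x‖ := by ring

def IsQuasiGreedyLargestCoeffs (e : ℕ → X) (f : ℕ → X →L[ℝ] ℝ) (P : ℕ → Prop) (C : ℝ) : Prop :=
  ∀ (A : Finset ℕ) (ε : ℕ → ℝ) (x : X), P #A → (∀ i ∈ A, |ε i| = 1) →
    (∀ i ∈ A, f i x = 0) → (∀ i, |f i x| ≤ 1) →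
    ‖∑ i ∈ A, ε i • e i‖ ≤ C * ‖(∑ i ∈ A, ε i • e i) + x‖

theorem IsQuasiGreedyLargestCoeffs.norm_sum_le_of_subset {P : ℕ → Prop} {C : ℝ}
    (h : IsQuasiGreedyLargestCoeffs e f P C) (hbi : ∀ i j, f i (e j) = if i = j then (1 : ℝ) else 0)
    {A : Finset ℕ} {ε : ℕ → ℝ} {x : X} (hε : ∀ i ∈ A, |ε i| = 1) (hx : ∀ i ∈ A, f i x = 0)
    (hx1 : ∀ i, |f i x| ≤ 1) {S : Finset ℕ} (hSA : S ⊆ A) (hS : P #S) :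
    ‖∑ i ∈ S, ε i • e i‖ ≤ C * ‖(∑ i ∈ A, ε i • e i) + x‖ := by
  set z := (∑ i ∈ A \ S, ε i • e i) + x
  have hsplit : (∑ i ∈ S, ε i • e i) + z = (∑ i ∈ A, ε i • e i) + x := by
    rw [← add_assoc, add_comm (∑ i ∈ S, _), sum_sdiff hSA]
  have hz : ∀ i, f i z = (if i ∈ A \ S then ε i else 0) + f i x := fun i => by
    rw [map_add, apply_sum_smul hbi]
  refine hsplit ▸ h S ε z hS (fun i hi => hε i (hSA hi)) (fun i hi => ?_) (fun i => ?_)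
  · rw [hz, if_neg fun h => (mem_sdiff.1 h).2 hi, hx i (hSA hi), add_zero]
  · rw [hz]
    split_ifs with hi
    · rw [hx i (mem_sdiff.1 hi).1, add_zero, hε i (mem_sdiff.1 hi).1]
    · rw [zero_add]
      exact hx1 i

theorem norm_sum_smul_le_of_forall_card_eq (hbi : ∀ i j, f i (e j) = if i = j then (1 : ℝ) else 0)
    {K : ℝ} (hK : 0 ≤ K) (hSch : ∀ (x : X) (m : ℕ), ‖∑ i ∈ range m, f i x • e i‖ ≤ K * ‖x‖)
    {A : Finset ℕ} {a : ℕ → ℝ} {ν : ℕ} (hν : 0 < ν) (hνA : ν ≤ #A) {c : ℝ}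
    (hblock : ∀ S ⊆ A, #S = ν → ‖∑ i ∈ S, a i • e i‖ ≤ c) :
    ‖∑ i ∈ A, a i • e i‖ ≤ (K + (#A / ν : ℕ)) * c := by
  obtain ⟨N, hN⟩ := exists_card_filter_lt_eq (Nat.mod_le #A ν)
  obtain ⟨N₁, hN₁⟩ := exists_card_filter_lt_eq hνA
  -- the first `#A % ν` elements of `A` are a basis projection of the first `ν` ones
  have hhead : (A.filter (· < N₁)).filter (· < N) = A.filter (· < N) := by
    have hsub : A.filter (· < N) ⊆ A.filter (· < N₁) :=
      filter_lt_subset_of_card_le (by rw [hN, hN₁]; exact (Nat.mod_lt _ hν).le)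
    ext i
    have := @hsub i
    simp only [mem_filter] at this ⊢
    tauto
  have hhead_le : ‖∑ i ∈ A.filter (· < N), a i • e i‖ ≤ K * c := calc
    ‖∑ i ∈ A.filter (· < N), a i • e i‖
        = ‖∑ i ∈ range N, f i (∑ j ∈ A.filter (· < N₁), a j • e j) • e i‖ := by
          rw [sum_range_apply_sum_smul_smul hbi, hhead]
    _ ≤ K * ‖∑ j ∈ A.filter (· < N₁), a j • e j‖ := hSch _ _
    _ ≤ K * c := by gcongr; exact hblock _ (filter_subset _ _) hN₁
  calc ‖∑ i ∈ A, a i • e i‖ ≤ ‖∑ i ∈ A.filter (· < N), a i • e i‖ + (#A / ν : ℕ) * c :=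
        norm_sum_le_norm_sum_filter_lt_add_mul _ hblock hN
    _ ≤ K * c + (#A / ν : ℕ) * c := by gcongr
    _ = (K + (#A / ν : ℕ)) * c := by ring

end Biorthogonal

theorem stmt7_general
    {X : Type*} [NormedAddCommGroup X] [NormedSpace ℝ X]
    (e : ℕ → X) (f : ℕ → X →L[ℝ] ℝ)
    (hbi : ∀ i j, f i (e j) = if i = j then (1 : ℝ) else 0)
    (α₁ α₂ : ℝ) (hα₁pos : 0 < α₁) (hα₂pos : 0 < α₂)
    (hα₁ : ∀ i, ‖e i‖ ≤ α₁) (hα₂ : ∀ i, ‖f i‖ ≤ α₂)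
    (K : ℝ) (hKpos : 0 < K)
    (hSch : ∀ (x : X) (m : ℕ), ‖∑ i ∈ Finset.range m, f i x • e i‖ ≤ K * ‖x‖)
    (nseq : ℕ → ℕ) (hmono : StrictMono nseq) (hn1 : 0 < nseq 0)
    (l : ℕ) (hgaps : ∀ k, nseq (k + 1) ≤ l * nseq k)
    (Cql : ℝ) (hCql : 0 < Cql)
    (hqglc : ∀ (A : Finset ℕ) (ε : ℕ → ℝ) (x : X),
      (∃ k, A.card = nseq k) → (∀ i ∈ A, |ε i| = 1) →
      (∀ i ∈ A, f i x = 0) → (∀ i, |f i x| ≤ 1) →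
      ‖∑ i ∈ A, ε i • e i‖ ≤ Cql * ‖(∑ i ∈ A, ε i • e i) + x‖) :
    ∀ (A : Finset ℕ) (ε : ℕ → ℝ) (x : X),
      (∀ i ∈ A, |ε i| = 1) →
      (∀ i ∈ A, f i x = 0) → (∀ i, |f i x| ≤ 1) →
      ‖∑ i ∈ A, ε i • e i‖ ≤
        max (α₁ * α₂ * (nseq 0 : ℝ)) (Cql * (K + (l : ℝ) - 1)) *
          ‖(∑ i ∈ A, ε i • e i) + x‖ := by
  intro A ε x hε hx hx1
  set y := (∑ i ∈ A, ε i • e i) + x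
  rcases lt_or_ge #A (nseq 0) with hsmall | hlarge
  · calc ‖∑ i ∈ A, ε i • e i‖ ≤ α₁ * α₂ * #A * ‖y‖ :=
          norm_sum_smul_le_mul_card_mul_norm hbi hα₁ hα₂ hε hx
      _ ≤ α₁ * α₂ * nseq 0 * ‖y‖ := by gcongr
      _ ≤ _ := by gcongr; exact le_max_left _ _
  obtain ⟨k, hk, hk1⟩ :=
    hmono.exists_between_of_tendsto_atTop hmono.tendsto_atTop (x := #A + 1) (by omega)
  have hν : 0 < nseq k := hn1.trans_le (hmono.monotone k.zero_le)
  have hq : ((#A / nseq k : ℕ) : ℝ) ≤ l - 1 := by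
    have : #A / nseq k < l := Nat.div_lt_of_lt_mul (by linarith [hgaps k, mul_comm l (nseq k)])
    exact le_sub_iff_add_le.mpr (by exact_mod_cast this)
  have hblock : ∀ S ⊆ A, #S = nseq k → ‖∑ i ∈ S, ε i • e i‖ ≤ Cql * ‖y‖ := fun S hSA hS =>
    IsQuasiGreedyLargestCoeffs.norm_sum_le_of_subset (P := fun m => ∃ k, m = nseq k) hqglc hbi
      hε hx hx1 hSA ⟨k, hS⟩
  calc ‖∑ i ∈ A, ε i • e i‖ ≤ (K + (#A / nseq k : ℕ)) * (Cql * ‖y‖) :=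
        norm_sum_smul_le_of_forall_card_eq hbi hKpos.le hSch hν (by omega) hblock
    _ ≤ (K + (l - 1)) * (Cql * ‖y‖) := by gcongr
    _ = Cql * (K + l - 1) * ‖y‖ := by ring
    _ ≤ _ := by gcongr; exact le_max_right _ _

/-- For a sequence with `l`-bounded gaps and a Schauder basis with constant
`K`, `Cql`-`n`-quasi-greediness for largest coefficients implies quasi-greediness for
largest coefficients (all finite `A`) with constant at most `max (α₁α₂n₁) (Cql(K+l-1))`. -/
theorem stmt7
    {X : Type*} [NormedAddCommGroup X] [NormedSpace ℝ X]
    (e : ℕ → X) (f : ℕ → X →L[ℝ] ℝ)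
    (hbi : ∀ i j, f i (e j) = if i = j then (1 : ℝ) else 0)
    (α₁ α₂ : ℝ) (hα₁pos : 0 < α₁) (hα₂pos : 0 < α₂)
    (hα₁ : ∀ i, ‖e i‖ ≤ α₁) (hα₂ : ∀ i, ‖f i‖ ≤ α₂)
    (K : ℝ) (hKpos : 0 < K)
    (hSch : ∀ (x : X) (m : ℕ), ‖∑ i ∈ Finset.range m, f i x • e i‖ ≤ K * ‖x‖)
    (nseq : ℕ → ℕ) (hmono : StrictMono nseq) (hn1 : 0 < nseq 0)
    (l : ℕ) (hl : 2 ≤ l) (hgaps : ∀ k, nseq (k + 1) ≤ l * nseq k)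
    (Cql : ℝ) (hCql : 0 < Cql)
    (hqglc : ∀ (A : Finset ℕ) (ε : ℕ → ℝ) (x : X),
      (∃ k, A.card = nseq k) → (∀ i ∈ A, |ε i| = 1) →
      (∀ i ∈ A, f i x = 0) → (∀ i, |f i x| ≤ 1) →
      ‖∑ i ∈ A, ε i • e i‖ ≤ Cql * ‖(∑ i ∈ A, ε i • e i) + x‖) :
    ∀ (A : Finset ℕ) (ε : ℕ → ℝ) (x : X),
      (∀ i ∈ A, |ε i| = 1) →
      (∀ i ∈ A, f i x = 0) → (∀ i, |f i x| ≤ 1) →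
      ‖∑ i ∈ A, ε i • e i‖ ≤
        max (α₁ * α₂ * (nseq 0 : ℝ)) (Cql * (K + (l : ℝ) - 1)) *
          ‖(∑ i ∈ A, ε i • e i) + x‖ :=
  stmt7_general e f hbi α₁ α₂ hα₁pos hα₂pos hα₁ hα₂ K hKpos hSch nseq hmono hn1 l hgaps Cql hCql
    hqglc
end

section
/- Let B be a Δ_b-n-bidemocratic basis and 0 < s ≤ 1. If B is C_{q,s}-n-s-quasi-greedy, then for all 0 < t ≤ 1 the dual basis B* is n-t-quasi-greedy with constant at most C_{q,s} + s⁻¹Δ_b + t⁻¹Δ_b. -/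
/-!
Fix `x` and a `t`-greedy set `B` of size `m = nseq k` for `g`. If `A` is an `s`-greedy set of
size `m` for `x`, split `∑_B = ∑_A + ∑_{B \ A} - ∑_{A \ B}`. The first sum is `g (P_A x)`, bounded by
quasi-greediness. Off `A` every `|e_j*(x)|` is at most `(s m)⁻¹ ∑_A |e_i*(x)|`, and off `B` every
`|g(e_i)|` is at most `(t m)⁻¹ ∑_B |g(e_j)|`, so bidemocracy bounds the other two sums by
`s⁻¹ Δ` and `t⁻¹ Δ`. Greedy sets of `x` need not exist, but pushing `x` by `η ∑_A ±e_i` along an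
almost greedy set `A` makes `A` exactly greedy, so such vectors are dense and the bound, a closed
condition, extends to all `x`.
-/

open Finset

def IsGreedySet (s : ℝ) (a : ℕ → ℝ) (A : Finset ℕ) : Prop :=
  ∀ i ∈ A, ∀ j ∉ A, s * |a j| ≤ |a i|

namespace IsGreedySet

variable {s : ℝ} {a : ℕ → ℝ} {A : Finset ℕ}

theorem mono {s' : ℝ} (h : IsGreedySet s a A) (hs : s' ≤ s) : IsGreedySet s' a A :=
  fun i hi j hj => (mul_le_mul_of_nonneg_right hs (abs_nonneg _)).trans (h i hi j hj)

theorem mul_card_mul_abs_le_sum (h : IsGreedySet s a A) {j : ℕ} (hj : j ∉ A) :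
    s * A.card * |a j| ≤ ∑ i ∈ A, |a i| := by
  calc s * A.card * |a j| = ∑ _i ∈ A, s * |a j| := by
        rw [sum_const, nsmul_eq_mul]; ring
    _ ≤ ∑ i ∈ A, |a i| := sum_le_sum fun i hi => h i hi j hj

theorem mul_card_mul_abs_sum_le (h : IsGreedySet s a A) (hs : 0 ≤ s) (b : ℕ → ℝ)
    {D : Finset ℕ} (hD : Disjoint D A) :
    s * A.card * |∑ j ∈ D, a j * b j| ≤ (∑ i ∈ A, |a i|) * ∑ j ∈ D, |b j| := by
  calc s * A.card * |∑ j ∈ D, a j * b j|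
      ≤ s * A.card * ∑ j ∈ D, |a j| * |b j| := by
        gcongr
        exact (abs_sum_le_sum_abs _ _).trans_eq (sum_congr rfl fun j _ => abs_mul _ _)
    _ = ∑ j ∈ D, s * A.card * |a j| * |b j| := by rw [mul_sum]; simp only [mul_assoc]
    _ ≤ ∑ j ∈ D, (∑ i ∈ A, |a i|) * |b j| := by
        gcongr with j hj
        exact h.mul_card_mul_abs_le_sum (disjoint_left.mp hD hj)
    _ = (∑ i ∈ A, |a i|) * ∑ j ∈ D, |b j| := by rw [mul_sum]

end IsGreedySet

theorem exists_card_eq_forall_le_add {v : ℕ → ℝ} (hv : BddAbove (Set.range v)) {δ : ℝ}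
    (hδ : 0 < δ) (m : ℕ) : ∃ A : Finset ℕ, A.card = m ∧ ∀ i ∈ A, ∀ j ∉ A, v j ≤ v i + δ := by
  induction m with
  | zero => exact ⟨∅, rfl, by simp⟩
  | succ m ih =>
    obtain ⟨A, hcard, hA⟩ := ih
    set S := v '' (↑A)ᶜ
    have hSne : S.Nonempty := A.finite_toSet.infinite_compl.nonempty.image v
    have hSbdd : BddAbove S := hv.mono (Set.image_subset_range _ _)
    obtain ⟨_, ⟨i₀, hi₀A, rfl⟩, hi₀⟩ := exists_lt_of_lt_csSup hSne (sub_lt_self (sSup S) hδ)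
    refine ⟨insert i₀ A, by rw [card_insert_of_notMem hi₀A, hcard], fun i hi j hj => ?_⟩
    have hjA : j ∉ A := fun h => hj (mem_insert_of_mem h)
    rcases mem_insert.mp hi with rfl | hiA
    · linarith [le_csSup hSbdd (Set.mem_image_of_mem v (show j ∈ (↑A : Set ℕ)ᶜ from hjA))]
    · exact hA i hiA j hjA

-- Unlike `Real.sign`, never `0`, so it is an admissible sign in the bidemocracy condition.
noncomputable def unitSign (r : ℝ) : ℝ := if 0 ≤ r then 1 else -1

theorem abs_unitSign (r : ℝ) : |unitSign r| = 1 := by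
  unfold unitSign; split_ifs <;> simp

theorem unitSign_mul_self (r : ℝ) : unitSign r * r = |r| := by
  unfold unitSign; split_ifs with h
  · rw [one_mul, abs_of_nonneg h]
  · rw [neg_one_mul, abs_of_neg (not_le.mp h)]

theorem abs_add_mul_unitSign {η : ℝ} (hη : 0 ≤ η) (r : ℝ) : |r + η * unitSign r| = |r| + η := by
  unfold unitSign; split_ifs with h
  · rw [mul_one, abs_of_nonneg h, abs_of_nonneg (by linarith)]
  · rw [mul_neg_one, abs_of_neg (not_le.mp h), abs_of_neg (by linarith)]; ring

theorem le_inv_mul_mul_of_mul_mul_le {r m y Δ c : ℝ} (hr : 0 < r) (hm : 0 < m)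
    (h : r * m * y ≤ Δ * m * c) : y ≤ r⁻¹ * Δ * c := by
  have hry : r * y ≤ Δ * c := le_of_mul_le_mul_left (by linarith) hm
  rwa [mul_assoc, inv_mul_eq_div, le_div_iff₀' hr]

section Biorthogonal

variable {X : Type*} [NormedAddCommGroup X] [NormedSpace ℝ X]

-- The pairwise form of `φ(n) φ*(n) ≤ Δ n` for `n` in the range of `nseq`.
def IsBidemocratic (e : ℕ → X) (f : ℕ → X →L[ℝ] ℝ) (nseq : ℕ → ℕ) (Δ : ℝ) : Prop :=
  ∀ (k : ℕ) (A B : Finset ℕ) (ε ε' : ℕ → ℝ), A.card ≤ nseq k → B.card ≤ nseq k →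
    (∀ i ∈ A, |ε i| = 1) → (∀ i ∈ B, |ε' i| = 1) →
    ‖∑ i ∈ A, ε i • e i‖ * ‖∑ i ∈ B, ε' i • f i‖ ≤ Δ * (nseq k : ℝ)

def IsQuasiGreedy (e : ℕ → X) (f : ℕ → X →L[ℝ] ℝ) (nseq : ℕ → ℕ) (s C : ℝ) : Prop :=
  ∀ (x : X) (A : Finset ℕ), (∃ k, A.card = nseq k) → IsGreedySet s (fun i => f i x) A →
    ‖∑ i ∈ A, f i x • e i‖ ≤ C * ‖x‖

variable {e : ℕ → X} {f : ℕ → X →L[ℝ] ℝ}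

theorem sum_abs_apply_le (x : X) (T : Finset ℕ) :
    ∑ i ∈ T, |f i x| ≤ ‖∑ i ∈ T, unitSign (f i x) • f i‖ * ‖x‖ := by
  have h : (∑ i ∈ T, unitSign (f i x) • f i) x = ∑ i ∈ T, |f i x| := by
    simp [unitSign_mul_self]
  exact h ▸ (Real.le_norm_self _).trans (ContinuousLinearMap.le_opNorm _ x)

theorem sum_abs_map_le (g : X →L[ℝ] ℝ) (T : Finset ℕ) :
    ∑ i ∈ T, |g (e i)| ≤ ‖g‖ * ‖∑ i ∈ T, unitSign (g (e i)) • e i‖ := by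
  have h : g (∑ i ∈ T, unitSign (g (e i)) • e i) = ∑ i ∈ T, |g (e i)| := by
    simp [unitSign_mul_self]
  exact h ▸ (Real.le_norm_self _).trans (g.le_opNorm _)

theorem apply_sum_smul_of_biorthogonal (hbi : ∀ i j, f i (e j) = if i = j then (1 : ℝ) else 0)
    (c : ℕ → ℝ) (A : Finset ℕ) (j : ℕ) :
    f j (∑ i ∈ A, c i • e i) = if j ∈ A then c j else 0 := by
  simp [hbi]

theorem exists_isGreedySet_near (hbi : ∀ i j, f i (e j) = if i = j then (1 : ℝ) else 0)
    {α₁ α₂ : ℝ} (hα₁ : ∀ i, ‖e i‖ ≤ α₁) (hα₂ : ∀ i, ‖f i‖ ≤ α₂) (x : X) (m : ℕ) {η : ℝ}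
    (hη : 0 < η) :
    ∃ y : X, ‖y - x‖ ≤ η * (m * α₁) ∧
      ∃ A : Finset ℕ, A.card = m ∧ IsGreedySet 1 (fun i => f i y) A := by
  have hbdd : BddAbove (Set.range fun i => |f i x|) := ⟨α₂ * ‖x‖, by
    rintro _ ⟨i, rfl⟩
    exact ((f i).le_opNorm x).trans (mul_le_mul_of_nonneg_right (hα₂ i) (norm_nonneg x))⟩
  obtain ⟨A, hA, hAx⟩ := exists_card_eq_forall_le_add hbdd hη m
  set u := ∑ i ∈ A, unitSign (f i x) • e i
  have hfy : ∀ j, f j (x + η • u) = f j x + η * if j ∈ A then unitSign (f j x) else 0 := by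
    intro j
    rw [map_add, map_smul, apply_sum_smul_of_biorthogonal hbi, smul_eq_mul]
  refine ⟨x + η • u, ?_, A, hA, fun i hi j hj => ?_⟩
  · rw [add_sub_cancel_left, norm_smul, Real.norm_of_nonneg hη.le, ← hA]
    gcongr
    calc ‖u‖ ≤ ∑ i ∈ A, ‖unitSign (f i x) • e i‖ := norm_sum_le _ _
      _ ≤ ∑ _i ∈ A, α₁ := sum_le_sum fun i _ => by
          rw [norm_smul, Real.norm_eq_abs, abs_unitSign, one_mul]; exact hα₁ i
      _ = A.card * α₁ := by rw [sum_const, nsmul_eq_mul]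
  · show 1 * |f j (x + η • u)| ≤ |f i (x + η • u)|
    rw [hfy, hfy, if_pos hi, if_neg hj, mul_zero, add_zero, one_mul,
      abs_add_mul_unitSign hη.le]
    exact hAx i hi j hj

theorem mem_closure_setOf_isGreedySet (hbi : ∀ i j, f i (e j) = if i = j then (1 : ℝ) else 0)
    {α₁ α₂ : ℝ} (hα₁ : ∀ i, ‖e i‖ ≤ α₁) (hα₂ : ∀ i, ‖f i‖ ≤ α₂) (m : ℕ) (x : X) :
    x ∈ closure {y | ∃ A : Finset ℕ, A.card = m ∧ IsGreedySet 1 (fun i => f i y) A} := by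
  have hK : 0 ≤ m * α₁ := mul_nonneg m.cast_nonneg ((norm_nonneg _).trans (hα₁ 0))
  refine Metric.mem_closure_iff.mpr fun ε hε => ?_
  obtain ⟨y, hxy, hy⟩ := exists_isGreedySet_near hbi hα₁ hα₂ x m
    (show 0 < ε / (m * α₁ + 1) by positivity)
  refine ⟨y, hy, ?_⟩
  calc dist x y = ‖y - x‖ := by rw [dist_comm, dist_eq_norm]
    _ ≤ ε / (m * α₁ + 1) * (m * α₁) := hxy
    _ < ε := by
        rw [div_mul_eq_mul_div, div_lt_iff₀ (by positivity)]
        nlinarith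

theorem IsBidemocratic.sum_abs_mul_sum_abs_le {nseq : ℕ → ℕ} {Δ : ℝ}
    (h : IsBidemocratic e f nseq Δ) {k : ℕ} {T S : Finset ℕ} (hT : T.card ≤ nseq k)
    (hS : S.card ≤ nseq k) (x : X) (g : X →L[ℝ] ℝ) :
    (∑ i ∈ T, |f i x|) * ∑ j ∈ S, |g (e j)| ≤ Δ * nseq k * (‖g‖ * ‖x‖) := by
  calc (∑ i ∈ T, |f i x|) * ∑ j ∈ S, |g (e j)|
      ≤ (‖∑ i ∈ T, unitSign (f i x) • f i‖ * ‖x‖) *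
          (‖g‖ * ‖∑ j ∈ S, unitSign (g (e j)) • e j‖) :=
        mul_le_mul (sum_abs_apply_le x T) (sum_abs_map_le g S)
          (sum_nonneg fun _ _ => abs_nonneg _) (by positivity)
    _ = (‖∑ j ∈ S, unitSign (g (e j)) • e j‖ * ‖∑ i ∈ T, unitSign (f i x) • f i‖) *
          (‖g‖ * ‖x‖) := by ring
    _ ≤ Δ * nseq k * (‖g‖ * ‖x‖) := by
        refine mul_le_mul_of_nonneg_right ?_ (by positivity)
        exact h k S T _ _ hS hT (fun i _ => abs_unitSign _) (fun i _ => abs_unitSign _)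

theorem IsBidemocratic.norm_sum_smul_apply_le {nseq : ℕ → ℕ} {Δ s t C : ℝ}
    (hbid : IsBidemocratic e f nseq Δ) (hΔ : 0 ≤ Δ) (hqg : IsQuasiGreedy e f nseq s C)
    (hC : 0 ≤ C) (hs : 0 < s) (ht : 0 < t) {k : ℕ} {A B : Finset ℕ} (hA : A.card = nseq k)
    (hB : B.card = nseq k) {x : X} {g : X →L[ℝ] ℝ} (hAx : IsGreedySet s (fun i => f i x) A)
    (hBg : IsGreedySet t (fun i => g (e i)) B) :
    ‖(∑ i ∈ B, g (e i) • f i) x‖ ≤ (C + s⁻¹ * Δ + t⁻¹ * Δ) * ‖g‖ * ‖x‖ := by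
  rcases (nseq k).eq_zero_or_pos with hm | hm
  · rw [hm, card_eq_zero] at hB
    subst hB
    simp only [sum_empty, zero_apply, norm_zero]
    positivity
  have hm' : (0 : ℝ) < nseq k := by exact_mod_cast hm
  have hsplit : (∑ i ∈ B, g (e i) • f i) x = ∑ i ∈ A, g (e i) * f i x
      + ∑ i ∈ B \ A, f i x * g (e i) - ∑ i ∈ A \ B, g (e i) * f i x := by
    simp only [_root_.sum_apply, smul_apply, smul_eq_mul, mul_comm (f _ x)]
    linarith [sum_sdiff_sub_sum_sdiff (s₁ := A) (s₂ := B) (f := fun i => g (e i) * f i x)]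
  have hA_part : |∑ i ∈ A, g (e i) * f i x| ≤ C * (‖g‖ * ‖x‖) := by
    have h : g (∑ i ∈ A, f i x • e i) = ∑ i ∈ A, g (e i) * f i x := by simp [mul_comm]
    calc |∑ i ∈ A, g (e i) * f i x| ≤ ‖g‖ * ‖∑ i ∈ A, f i x • e i‖ :=
          h ▸ (Real.norm_eq_abs _).symm.trans_le (g.le_opNorm _)
      _ ≤ ‖g‖ * (C * ‖x‖) := by gcongr; exact hqg x A ⟨k, hA⟩ hAx
      _ = C * (‖g‖ * ‖x‖) := by ring
  have hBA_part : |∑ i ∈ B \ A, f i x * g (e i)| ≤ s⁻¹ * Δ * (‖g‖ * ‖x‖) := by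
    refine le_inv_mul_mul_of_mul_mul_le hs hm' ?_
    rw [← hA]
    exact (hAx.mul_card_mul_abs_sum_le hs.le (fun i => g (e i)) sdiff_disjoint).trans
      (hA ▸ hbid.sum_abs_mul_sum_abs_le hA.le ((card_le_card sdiff_subset).trans hB.le) x g)
  have hAB_part : |∑ i ∈ A \ B, g (e i) * f i x| ≤ t⁻¹ * Δ * (‖g‖ * ‖x‖) := by
    refine le_inv_mul_mul_of_mul_mul_le ht hm' ?_
    rw [← hB]
    refine (hBg.mul_card_mul_abs_sum_le ht.le (fun i => f i x) sdiff_disjoint).trans ?_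
    rw [mul_comm]
    exact hB ▸ hbid.sum_abs_mul_sum_abs_le ((card_le_card sdiff_subset).trans hA.le) hB.le x g
  rw [hsplit, Real.norm_eq_abs]
  calc _ ≤ |∑ i ∈ A, g (e i) * f i x| + |∑ i ∈ B \ A, f i x * g (e i)|
        + |∑ i ∈ A \ B, g (e i) * f i x| := by
        rw [sub_eq_add_neg, ← abs_neg (∑ i ∈ A \ B, _)]
        exact abs_add_three _ _ _
    _ ≤ (C + s⁻¹ * Δ + t⁻¹ * Δ) * ‖g‖ * ‖x‖ := by nlinarith

end Biorthogonal

theorem stmt10_general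
    {X : Type*} [NormedAddCommGroup X] [NormedSpace ℝ X]
    (e : ℕ → X) (f : ℕ → X →L[ℝ] ℝ)
    (hbi : ∀ i j, f i (e j) = if i = j then (1 : ℝ) else 0)
    (α₁ α₂ : ℝ)
    (hα₁ : ∀ i, ‖e i‖ ≤ α₁) (hα₂ : ∀ i, ‖f i‖ ≤ α₂)
    (nseq : ℕ → ℕ)
    (Δb : ℝ) (hΔb : 0 < Δb)
    (hbidem : ∀ (k : ℕ) (A B : Finset ℕ) (ε ε' : ℕ → ℝ),
      A.card ≤ nseq k → B.card ≤ nseq k →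
      (∀ i ∈ A, |ε i| = 1) → (∀ i ∈ B, |ε' i| = 1) →
      ‖∑ i ∈ A, ε i • e i‖ * ‖∑ i ∈ B, ε' i • f i‖ ≤ Δb * (nseq k : ℝ))
    (s : ℝ) (hs0 : 0 < s) (hs1 : s ≤ 1)
    (Cqs : ℝ) (hCqs : 0 < Cqs)
    (hqg : ∀ (x : X) (A : Finset ℕ), (∃ k, A.card = nseq k) →
      (∀ i ∈ A, ∀ j ∉ A, s * |f j x| ≤ |f i x|) →
      ‖∑ i ∈ A, f i x • e i‖ ≤ Cqs * ‖x‖) :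
    ∀ (t : ℝ), 0 < t → t ≤ 1 →
      ∀ (g : X →L[ℝ] ℝ),
        g ∈ closure (↑(Submodule.span ℝ (Set.range f)) : Set (X →L[ℝ] ℝ)) →
        ∀ (B : Finset ℕ), (∃ k, B.card = nseq k) →
          (∀ i ∈ B, ∀ j ∉ B, t * |g (e j)| ≤ |g (e i)|) →
          ‖∑ i ∈ B, g (e i) • f i‖ ≤ (Cqs + s⁻¹ * Δb + t⁻¹ * Δb) * ‖g‖ := by
  intro t ht _ g _ B ⟨k, hB⟩ hBg
  set L := ∑ i ∈ B, g (e i) • f i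
  set C := Cqs + s⁻¹ * Δb + t⁻¹ * Δb
  have hbound_closed : IsClosed {y : X | ‖L y‖ ≤ C * ‖g‖ * ‖y‖} :=
    isClosed_le (by fun_prop) (by fun_prop)
  have hbound_greedy :
      {y | ∃ A : Finset ℕ, A.card = nseq k ∧ IsGreedySet 1 (fun i => f i y) A} ⊆
        {y : X | ‖L y‖ ≤ C * ‖g‖ * ‖y‖} := by
    rintro y ⟨A, hA, hAy⟩
    exact IsBidemocratic.norm_sum_smul_apply_le hbidem hΔb.le hqg hCqs.le hs0 ht hA hB
      (hAy.mono hs1) hBg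
  refine L.opNorm_le_bound (by positivity) fun x => ?_
  exact hbound_closed.closure_subset_iff.mpr hbound_greedy
    (mem_closure_setOf_isGreedySet hbi hα₁ hα₂ (nseq k) x)

/-- If `B` is `Δb`-`n`-bidemocratic and `Cqs`-`n`-`s`-quasi-greedy
(`0 < s ≤ 1`), then for all `0 < t ≤ 1` the dual basis is `n`-`t`-quasi-greedy with
constant at most `Cqs + s⁻¹Δb + t⁻¹Δb`. Bidemocracy is formalized in the equivalent
pairwise form `‖1_{εA}‖·‖1*_{ε'B}‖ ≤ Δb·n` for `|A|, |B| ≤ n ∈ 𝐧`. -/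
theorem stmt10
    {X : Type*} [NormedAddCommGroup X] [NormedSpace ℝ X]
    (e : ℕ → X) (f : ℕ → X →L[ℝ] ℝ)
    (hbi : ∀ i j, f i (e j) = if i = j then (1 : ℝ) else 0)
    (α₁ α₂ : ℝ) (hα₁pos : 0 < α₁) (hα₂pos : 0 < α₂)
    (hα₁ : ∀ i, ‖e i‖ ≤ α₁) (hα₂ : ∀ i, ‖f i‖ ≤ α₂)
    (nseq : ℕ → ℕ) (hmono : StrictMono nseq) (hn1 : 0 < nseq 0)
    (Δb : ℝ) (hΔb : 0 < Δb)
    (hbidem : ∀ (k : ℕ) (A B : Finset ℕ) (ε ε' : ℕ → ℝ),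
      A.card ≤ nseq k → B.card ≤ nseq k →
      (∀ i ∈ A, |ε i| = 1) → (∀ i ∈ B, |ε' i| = 1) →
      ‖∑ i ∈ A, ε i • e i‖ * ‖∑ i ∈ B, ε' i • f i‖ ≤ Δb * (nseq k : ℝ))
    (s : ℝ) (hs0 : 0 < s) (hs1 : s ≤ 1)
    (Cqs : ℝ) (hCqs : 0 < Cqs)
    (hqg : ∀ (x : X) (A : Finset ℕ), (∃ k, A.card = nseq k) →
      (∀ i ∈ A, ∀ j ∉ A, s * |f j x| ≤ |f i x|) →
      ‖∑ i ∈ A, f i x • e i‖ ≤ Cqs * ‖x‖) :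
    ∀ (t : ℝ), 0 < t → t ≤ 1 →
      ∀ (g : X →L[ℝ] ℝ),
        g ∈ closure (↑(Submodule.span ℝ (Set.range f)) : Set (X →L[ℝ] ℝ)) →
        ∀ (B : Finset ℕ), (∃ k, B.card = nseq k) →
          (∀ i ∈ B, ∀ j ∉ B, t * |g (e j)| ≤ |g (e i)|) →
          ‖∑ i ∈ B, g (e i) • f i‖ ≤ (Cqs + s⁻¹ * Δb + t⁻¹ * Δb) * ‖g‖ :=
  stmt10_general e f hbi α₁ α₂ hα₁ hα₂ nseq Δb hΔb hbidem s hs0 hs1 Cqs hCqs hqg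
end
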